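/- Let G be a finite connected P6-free graph, v a vertex of G, D an efficient dominating set of G with v ∈ D, b* ∈ N_2(v), and q* ∈ D ∩ N_3(v) the unique vertex of D adjacent to b* (i.e., D ∩ N[b*] = {q*}). Let Q be a connected component of the induced subgraph G[N_3(v) ∪ N_4(v)] not containing q* such that b* has a neighbor in Q, and set Q^+ = N(b*) ∩ Q and Q^- = Q \ N(b*). Then Q^+ ∩ D = ∅, and every connected component K of the induced subgraph G[Q^-] satisfies |K ∩ D| = 1, where the unique vertex of K ∩ D is universal for K, i.e., adjacent to every other vertex of K. -/
import Mathlib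

open SimpleGraph

/-- The `i`-th distance level of a vertex `v`: the set of vertices at distance exactly `i`
from `v` in `G`. -/
def distLevel {V : Type*} (G : SimpleGraph V) (v : V) (i : ℕ) : Set V :=
  {u : V | G.dist v u = i}

/-- A graph is `P₆`-free if it contains no induced subgraph isomorphic to the chordless
path on 6 vertices. -/
def P6Free {V : Type*} (G : SimpleGraph V) : Prop :=
  ¬ ∃ f : Fin 6 ↪ V, ∀ i j : Fin 6,
      G.Adj (f i) (f j) ↔ ((i : ℕ) + 1 = (j : ℕ) ∨ (j : ℕ) + 1 = (i : ℕ))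

/-- `D` is an efficient dominating set of `G`: every vertex is dominated by exactly one
vertex of `D` (a vertex dominates itself and its neighbors). -/
def IsEDS {V : Type*} (G : SimpleGraph V) (D : Set V) : Prop :=
  ∀ u : V, ∃! d : V, d ∈ D ∧ (d = u ∨ G.Adj d u)

/-- `Q` is (the vertex set of) a connected component of the subgraph of `G` induced by `S`:
`Q` is a nonempty subset of `S`, `Q` induces a connected graph, and `Q` is closed under
adjacency within `S`. -/
def IsCompOf {V : Type*} (G : SimpleGraph V) (S Q : Set V) : Prop :=
  Q ⊆ S ∧ Q.Nonempty ∧ (G.induce Q).Connected ∧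
    ∀ x ∈ Q, ∀ y ∈ S, G.Adj x y → y ∈ Q

section Aux
variable {V : Type*} {G : SimpleGraph V}

private lemma adj_dist_le' (hconn : G.Connected) {v x y : V} (h : G.Adj x y) :
    G.dist v y ≤ G.dist v x + 1 := by
  have h1 : G.dist x y ≤ 1 := G.dist_le h.toWalk
  have h2 := hconn.dist_triangle (u := v) (v := x) (w := y)
  omega

private lemma not_adj_far {v x y : V} (hconn : G.Connected)
    (hgap : G.dist v x + 1 < G.dist v y) : ¬ G.Adj x y :=
  fun h => by have := adj_dist_le' hconn (v := v) h; omega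

private lemma ne_of_dist_ne {x y : V} (G : SimpleGraph V) (v : V)
    (h : G.dist v x ≠ G.dist v y) : x ≠ y :=
  fun e => h (by rw [e])

private lemma exists_pred (hconn : G.Connected) {v u : V} {n : ℕ}
    (h : G.dist v u = n + 1) : ∃ w, G.Adj w u ∧ G.dist v w = n := by
  obtain ⟨p, hp⟩ := (hconn.preconnected v u).exists_walk_length_eq_dist
  have hlen : p.reverse.length = n + 1 := by rw [SimpleGraph.Walk.length_reverse, hp, h]
  cases hrev : p.reverse with
  | nil => rw [hrev] at hlen; simp at hlen
  | cons hadj q =>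
    rw [hrev] at hlen
    simp only [SimpleGraph.Walk.length_cons] at hlen
    rename_i w
    refine ⟨w, hadj.symm, ?_⟩
    have h1 : G.dist v w ≤ n := by
      have hq := G.dist_le q.reverse
      rw [SimpleGraph.Walk.length_reverse] at hq
      omega
    have h2 : G.dist v u ≤ G.dist v w + 1 := adj_dist_le' hconn hadj.symm
    omega

private lemma p6_false (hP6 : P6Free G) (a0 a1 a2 a3 a4 a5 : V)
    (h01 : G.Adj a0 a1) (h12 : G.Adj a1 a2) (h23 : G.Adj a2 a3)
    (h34 : G.Adj a3 a4) (h45 : G.Adj a4 a5)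
    (n02 : ¬ G.Adj a0 a2) (n03 : ¬ G.Adj a0 a3) (n04 : ¬ G.Adj a0 a4) (n05 : ¬ G.Adj a0 a5)
    (n13 : ¬ G.Adj a1 a3) (n14 : ¬ G.Adj a1 a4) (n15 : ¬ G.Adj a1 a5)
    (n24 : ¬ G.Adj a2 a4) (n25 : ¬ G.Adj a2 a5) (n35 : ¬ G.Adj a3 a5)
    (d02 : a0 ≠ a2) (d03 : a0 ≠ a3) (d04 : a0 ≠ a4) (d05 : a0 ≠ a5)
    (d13 : a1 ≠ a3) (d14 : a1 ≠ a4) (d15 : a1 ≠ a5)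
    (d24 : a2 ≠ a4) (d25 : a2 ≠ a5) (d35 : a3 ≠ a5) : False := by
  have d01 := h01.ne
  have d12 := h12.ne
  have d23 := h23.ne
  have d34 := h34.ne
  have d45 := h45.ne
  have h10 := h01.symm
  have h21 := h12.symm
  have h32 := h23.symm
  have h43 := h34.symm
  have h54 := h45.symm
  have n20 : ¬ G.Adj a2 a0 := fun h => n02 h.symm
  have n30 : ¬ G.Adj a3 a0 := fun h => n03 h.symm
  have n40 : ¬ G.Adj a4 a0 := fun h => n04 h.symm
  have n50 : ¬ G.Adj a5 a0 := fun h => n05 h.symm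
  have n31 : ¬ G.Adj a3 a1 := fun h => n13 h.symm
  have n41 : ¬ G.Adj a4 a1 := fun h => n14 h.symm
  have n51 : ¬ G.Adj a5 a1 := fun h => n15 h.symm
  have n42 : ¬ G.Adj a4 a2 := fun h => n24 h.symm
  have n52 : ¬ G.Adj a5 a2 := fun h => n25 h.symm
  have n53 : ¬ G.Adj a5 a3 := fun h => n35 h.symm
  have d10 := d01.symm; have d21 := d12.symm; have d32 := d23.symm
  have d43 := d34.symm; have d54 := d45.symm
  have d20 := d02.symm; have d30 := d03.symm; have d40 := d04.symm
  have d50 := d05.symm; have d31 := d13.symm; have d41 := d14.symm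
  have d51 := d15.symm; have d42 := d24.symm; have d52 := d25.symm
  have d53 := d35.symm
  apply hP6
  refine ⟨⟨![a0,a1,a2,a3,a4,a5], ?_⟩, ?_⟩
  · intro i j hij
    fin_cases i <;> fin_cases j <;> simp at hij ⊢ <;> exact absurd hij (by assumption)
  · intro i j
    fin_cases i <;> fin_cases j <;> simp <;> assumption

private lemma no_dist5 {v d : V} (hconn : G.Connected) (hP6 : P6Free G)
    (h : G.dist v d = 5) : False := by
  obtain ⟨p4, a4d, h4⟩ := exists_pred hconn (show G.dist v d = 4 + 1 from h)
  obtain ⟨p3, a34, h3⟩ := exists_pred hconn (show G.dist v p4 = 3 + 1 from h4)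
  obtain ⟨p2, a23, h2⟩ := exists_pred hconn (show G.dist v p3 = 2 + 1 from h3)
  obtain ⟨p1, a12, h1⟩ := exists_pred hconn (show G.dist v p2 = 1 + 1 from h2)
  have hva : G.Adj v p1 := SimpleGraph.dist_eq_one_iff_adj.mp h1
  have h0 : G.dist v v = 0 := SimpleGraph.dist_self
  exact p6_false hP6 v p1 p2 p3 p4 d hva a12 a23 a34 a4d
    (not_adj_far (v := v) hconn (by omega)) (not_adj_far (v := v) hconn (by omega))
    (not_adj_far (v := v) hconn (by omega)) (not_adj_far (v := v) hconn (by omega))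
    (not_adj_far (v := v) hconn (by omega)) (not_adj_far (v := v) hconn (by omega))
    (not_adj_far (v := v) hconn (by omega)) (not_adj_far (v := v) hconn (by omega))
    (not_adj_far (v := v) hconn (by omega)) (not_adj_far (v := v) hconn (by omega))
    (ne_of_dist_ne G v (by omega)) (ne_of_dist_ne G v (by omega))
    (ne_of_dist_ne G v (by omega)) (ne_of_dist_ne G v (by omega))
    (ne_of_dist_ne G v (by omega)) (ne_of_dist_ne G v (by omega))
    (ne_of_dist_ne G v (by omega)) (ne_of_dist_ne G v (by omega))
    (ne_of_dist_ne G v (by omega)) (ne_of_dist_ne G v (by omega))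

end Aux

/-- Setup as before. Let `Q` be a component of `G[N₃(v) ∪ N₄(v)]` not containing `q*`
such that `b*` has a neighbor in `Q`, and set `Q⁺ = N(b*) ∩ Q`, `Q⁻ = Q \ N(b*)`.
Then `Q⁺ ∩ D = ∅` and every connected component `K` of `G[Q⁻]` satisfies
`|K ∩ D| = 1`, with the unique vertex of `K ∩ D` universal for `K`. -/
theorem stmt_13 {V : Type*} [Fintype V] (G : SimpleGraph V) (hconn : G.Connected)
    (hP6 : P6Free G) (D : Set V) (hD : IsEDS G D) (v : V) (hv : v ∈ D)
    (bstar : V) (hb : bstar ∈ distLevel G v 2)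
    (qstar : V) (hq : qstar ∈ D ∩ distLevel G v 3)
    (huniq : D ∩ insert bstar (G.neighborSet bstar) = {qstar})
    (Q : Set V) (hQ : IsCompOf G (distLevel G v 3 ∪ distLevel G v 4) Q)
    (hqQ : qstar ∉ Q) (hcontact : ∃ y ∈ Q, G.Adj bstar y)
    (Qplus Qminus : Set V)
    (hplus : Qplus = G.neighborSet bstar ∩ Q)
    (hminus : Qminus = Q \ G.neighborSet bstar) :
    Qplus ∩ D = ∅ ∧
      ∀ K : Set V, IsCompOf G Qminus K →
        ∃ q : V, K ∩ D = {q} ∧ ∀ y ∈ K, y ≠ q → G.Adj q y := by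
  subst hplus hminus
  obtain ⟨hQS, hQne, hQconn, hQclose⟩ := hQ
  have hb2 : G.dist v bstar = 2 := hb
  have hv0 : G.dist v v = 0 := SimpleGraph.dist_self
  have hQdist : ∀ u ∈ Q, G.dist v u = 3 ∨ G.dist v u = 4 := by
    intro u hu
    rcases hQS hu with h | h
    · exact Or.inl h
    · exact Or.inr h
  obtain ⟨a, hab, ha1⟩ := exists_pred hconn (show G.dist v bstar = 1 + 1 from hb2)
  have hva : G.Adj v a := SimpleGraph.dist_eq_one_iff_adj.mp ha1
  have hmemq : ∀ x, x ∈ D → (x = bstar ∨ G.Adj bstar x) → x = qstar := by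
    intro x hxD hx
    have hxm : x ∈ D ∩ insert bstar (G.neighborSet bstar) := by
      refine ⟨hxD, ?_⟩
      rcases hx with h | h
      · exact Set.mem_insert_iff.mpr (Or.inl h)
      · exact Set.mem_insert_iff.mpr (Or.inr h)
    rw [huniq] at hxm
    exact hxm
  have hQplusD : (G.neighborSet bstar ∩ Q) ∩ D = ∅ := by
    ext x
    simp only [Set.mem_inter_iff, Set.mem_empty_iff_false, iff_false, not_and]
    rintro ⟨hxN, hxQ⟩ hxD
    exact hqQ ((hmemq x hxD (Or.inr hxN)) ▸ hxQ)
  have hDQm : ∀ x ∈ Q, x ∈ D → ¬ G.Adj bstar x := fun x hxQ hxD hadj =>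
    hqQ ((hmemq x hxD (Or.inr hadj)) ▸ hxQ)
  have hyd3 : ∀ y ∈ Q, G.Adj bstar y → G.dist v y = 3 := by
    intro y hy hadj
    have h1 := adj_dist_le' hconn (v := v) hadj
    rcases hQdist y hy with h | h
    · exact h
    · omega
  -- the key P6-freeness consequence
  have key : ∀ y ∈ Q, G.Adj bstar y → ∀ u ∈ Q, ¬ G.Adj bstar u → ∀ w ∈ Q, ¬ G.Adj bstar w →
      G.Adj y u → G.Adj u w → G.Adj y w := by
    intro y hyQ hby u huQ hbu w hwQ hbw hyu huw
    by_contra hyw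
    have hy3 := hyd3 y hyQ hby
    have hu34 := hQdist u huQ
    have hw34 := hQdist w hwQ
    exact p6_false hP6 v a bstar y u w hva hab hby hyu huw
      (not_adj_far (v := v) hconn (by omega)) (not_adj_far (v := v) hconn (by omega))
      (not_adj_far (v := v) hconn (by omega)) (not_adj_far (v := v) hconn (by omega))
      (not_adj_far (v := v) hconn (by omega)) (not_adj_far (v := v) hconn (by omega))
      (not_adj_far (v := v) hconn (by omega)) hbu hbw hyw
      (ne_of_dist_ne G v (by omega)) (ne_of_dist_ne G v (by omega))
      (ne_of_dist_ne G v (by omega)) (ne_of_dist_ne G v (by omega))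
      (ne_of_dist_ne G v (by omega)) (ne_of_dist_ne G v (by omega))
      (ne_of_dist_ne G v (by omega)) (ne_of_dist_ne G v (by omega))
      (ne_of_dist_ne G v (by omega)) (fun e => hbw (e ▸ hby))
  obtain ⟨y0, hy0Q, hby0⟩ := hcontact
  have stepQ : ∀ x z : V, x ∈ Q → z ∈ Q → G.Adj x z →
      (G.Adj bstar x ∨ ∃ y ∈ Q, G.Adj bstar y ∧ G.Adj y x) →
      (G.Adj bstar z ∨ ∃ y ∈ Q, G.Adj bstar y ∧ G.Adj y z) := by
    intro x z hxQ hzQ hxz hx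
    by_cases hbz : G.Adj bstar z
    · exact Or.inl hbz
    rcases hx with hbx | ⟨y, hyQ, hby, hyx⟩
    · exact Or.inr ⟨x, hxQ, hbx, hxz⟩
    by_cases hbx : G.Adj bstar x
    · exact Or.inr ⟨x, hxQ, hbx, hxz⟩
    · exact Or.inr ⟨y, hyQ, hby, key y hyQ hby x hxQ hbx z hzQ hbz hyx hxz⟩
  have L : ∀ u ∈ Q, G.Adj bstar u ∨ ∃ y ∈ Q, G.Adj bstar y ∧ G.Adj y u := by
    intro u hu
    obtain ⟨p⟩ := hQconn.preconnected ⟨y0, hy0Q⟩ ⟨u, hu⟩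
    have H : ∀ (s t : Q), (G.induce Q).Walk s t →
        (G.Adj bstar s.1 ∨ ∃ y ∈ Q, G.Adj bstar y ∧ G.Adj y s.1) →
        (G.Adj bstar t.1 ∨ ∃ y ∈ Q, G.Adj bstar y ∧ G.Adj y t.1) := by
      intro s t p
      induction p with
      | nil => exact id
      | cons h q ih =>
        rename_i x b _
        intro hs
        exact ih (stepQ x.1 b.1 x.2 b.2 (by simpa using h) hs)
    exact H _ _ p (Or.inl hby0)
  -- no D-vertex at distance 2 from v
  have hNoD2 : ∀ d ∈ D, G.dist v d ≠ 2 := by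
    intro d hdD h2
    obtain ⟨w, hwd, hw1⟩ := exists_pred hconn (show G.dist v d = 1 + 1 from h2)
    have hvw : G.Adj v w := SimpleGraph.dist_eq_one_iff_adj.mp hw1
    obtain ⟨e, _, hun⟩ := hD w
    have hve := hun v ⟨hv, Or.inr hvw⟩
    have hde := hun d ⟨hdD, Or.inr hwd.symm⟩
    have hdv : d = v := hde.trans hve.symm
    rw [hdv, hv0] at h2
    omega
  -- the dominating vertex of any u in a component K of Qminus lies in K
  have domK : ∀ (K : Set V), K ⊆ Q \ G.neighborSet bstar →
      (∀ x ∈ K, ∀ y ∈ Q \ G.neighborSet bstar, G.Adj x y → y ∈ K) →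
      ∀ u ∈ K, ∃ q, q ∈ K ∧ q ∈ D ∧ (q = u ∨ G.Adj q u) := by
    intro K hKsub hKclose u huK
    obtain ⟨d, ⟨hdD, hdom⟩, _⟩ := hD u
    have huQm := hKsub huK
    have huQ : u ∈ Q := huQm.1
    rcases hdom with rfl | hadj
    · exact ⟨d, huK, hdD, Or.inl rfl⟩
    · have hud : G.Adj u d := hadj.symm
      have hd1 : G.dist v d ≤ G.dist v u + 1 := adj_dist_le' hconn hud
      have hd2 : G.dist v u ≤ G.dist v d + 1 := adj_dist_le' hconn hadj
      have hu34 := hQdist u huQ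
      have hne2 := hNoD2 d hdD
      have hne5 : G.dist v d ≠ 5 := fun h5 => no_dist5 hconn hP6 h5
      have hdS : d ∈ distLevel G v 3 ∪ distLevel G v 4 := by
        have hd34 : G.dist v d = 3 ∨ G.dist v d = 4 := by omega
        rcases hd34 with h | h
        · exact Or.inl h
        · exact Or.inr h
      have hdQ : d ∈ Q := hQclose u huQ d hdS hud
      have hbd : ¬ G.Adj bstar d := hDQm d hdQ hdD
      have hdK : d ∈ K := hKclose u huK d ⟨hdQ, hbd⟩ hud
      exact ⟨d, hdK, hdD, Or.inr hadj⟩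
  refine ⟨hQplusD, ?_⟩
  intro K hK
  obtain ⟨hKsub, hKne, hKconn, hKclose⟩ := hK
  obtain ⟨u0, hu0⟩ := hKne
  have hu0m := hKsub hu0
  have hbu0 : ¬ G.Adj bstar u0 := hu0m.2
  rcases L u0 hu0m.1 with h | ⟨yc, hycQ, hbyc, hycu0⟩
  · exact absurd h hbu0
  -- yc is adjacent to every vertex of K
  have yAll : ∀ u ∈ K, G.Adj yc u := by
    intro u hu
    obtain ⟨p⟩ := hKconn.preconnected ⟨u0, hu0⟩ ⟨u, hu⟩
    have H : ∀ (s t : K), (G.induce K).Walk s t → G.Adj yc s.1 → G.Adj yc t.1 := by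
      intro s t p
      induction p with
      | nil => exact id
      | cons h q ih =>
        rename_i x b _
        intro hs
        have hxm := hKsub x.2
        have hbm := hKsub b.2
        exact ih (key yc hycQ hbyc x.1 hxm.1 hxm.2 b.1 hbm.1 hbm.2 hs (by simpa using h))
    exact H _ _ p hycu0
  obtain ⟨q, hqK, hqD2, _⟩ := domK K hKsub hKclose u0 hu0
  obtain ⟨e, _, hun⟩ := hD yc
  have hqe : q = e := hun q ⟨hqD2, Or.inr (yAll q hqK).symm⟩
  have hKD : K ∩ D = {q} := by
    apply Set.eq_singleton_iff_unique_mem.mpr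
    refine ⟨⟨hqK, hqD2⟩, ?_⟩
    rintro x ⟨hxK, hxD⟩
    have hxe := hun x ⟨hxD, Or.inr (yAll x hxK).symm⟩
    rw [hxe, hqe]
  refine ⟨q, hKD, ?_⟩
  intro u huK hne
  obtain ⟨q', hq'K, hq'D, hq'dom⟩ := domK K hKsub hKclose u huK
  have hq'q : q' = q := by
    have h1 := hun q' ⟨hq'D, Or.inr (yAll q' hq'K).symm⟩
    rw [h1, hqe]
  subst hq'q
  rcases hq'dom with h | h
  · exact absurd h.symm hne
  · exact h
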